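/- arXiv:0907.5138 — 6 statements merged into one kernel-verified Lean document; each statement's English description precedes it below -/
import Mathlib

section
/- For every finite simple graph G, the cutwidth satisfies cw(G) ≥ δ(G)²/4 + δ(G)/2, where δ(G) is the degeneracy of G. -/
open Finset

variable {V : Type*}

/-- The number of edges crossing position `i` in the linear ordering `f`. -/
def SimpleGraph.cutAt [Fintype V] [DecidableEq V] (G : SimpleGraph V) [DecidableRel G.Adj]
    (f : V ≃ Fin (Fintype.card V)) (i : Fin (Fintype.card V)) : ℕ :=
  (G.edgeFinset.filter (fun e => ∃ u ∈ e, ∃ v ∈ e, f u ≤ i ∧ i < f v)).card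

/-- The cutwidth of a finite simple graph. -/
noncomputable def SimpleGraph.cutwidth [Fintype V] [DecidableEq V] (G : SimpleGraph V)
    [DecidableRel G.Adj] : ℕ :=
  sInf { m | ∃ f : V ≃ Fin (Fintype.card V), m = Finset.univ.sup (fun i => G.cutAt f i) }

/-- The degeneracy of a finite simple graph. -/
noncomputable def SimpleGraph.degeneracy [Fintype V] [DecidableEq V] (G : SimpleGraph V)
    [DecidableRel G.Adj] : ℕ :=
  sSup { k | ∃ s : Finset V, s.Nonempty ∧ ∀ v ∈ s, k ≤ (s.filter (G.Adj v)).card }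

/-- Number of edges of the induced subgraph on `s`. -/
def SimpleGraph.inducedEdgeCount [Fintype V] [DecidableEq V] (G : SimpleGraph V)
    [DecidableRel G.Adj] (s : Finset V) : ℕ :=
  (G.edgeFinset.filter (fun e => ∀ u ∈ e, u ∈ s)).card

/-- `(ρ, λ)`-uniform sparsity. -/
def SimpleGraph.UniformlySparse [Fintype V] [DecidableEq V] (G : SimpleGraph V)
    [DecidableRel G.Adj] (ρ lam : ℝ) : Prop :=
  ∀ s : Finset V, ρ * (Fintype.card V : ℝ) ≤ (s.card : ℝ) →
    (G.inducedEdgeCount s : ℝ) ≤ (s.card : ℝ) * ((s.card : ℝ) - 1) / (2 * lam)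

lemma key_cut [Fintype V] [DecidableEq V] (G : SimpleGraph V) [DecidableRel G.Adj]
    (s : Finset V) (hs : s.Nonempty) (d k : ℕ) (hk1 : 1 ≤ k) (hkd : k ≤ d)
    (hdeg : ∀ v ∈ s, d ≤ (s.filter (G.Adj v)).card)
    (f : V ≃ Fin (Fintype.card V)) :
    ∃ i, k * (d + 1 - k) ≤ G.cutAt f i := by
  classical
  have hV : Nonempty V := ⟨hs.choose⟩
  have hn : 0 < Fintype.card V := Fintype.card_pos
  have hsd : d < s.card := by
    obtain ⟨v, hv⟩ := hs
    have h1 : s.filter (G.Adj v) ⊆ s.erase v := by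
      intro w hw
      simp only [mem_filter] at hw
      exact mem_erase.mpr ⟨fun h => G.irrefl (h ▸ hw.2), hw.1⟩
    have := (hdeg v hv).trans (card_le_card h1)
    rw [card_erase_of_mem hv] at this
    omega
  set top : Fin (Fintype.card V) := ⟨Fintype.card V - 1, by omega⟩ with htopdef
  set P := univ.filter (fun j => k ≤ (s.filter (fun v => f v ≤ j)).card) with hPdef
  have htopmem : top ∈ P := by
    simp only [hPdef, mem_filter, mem_univ, true_and]
    have : s.filter (fun v => f v ≤ top) = s := by
      apply filter_true_of_mem
      intro v _
      rw [Fin.le_def]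
      have := (f v).isLt
      simp only [htopdef]
      omega
    rw [this]; omega
  have hP : P.Nonempty := ⟨top, htopmem⟩
  set i := P.min' hP with hidef
  have hiP : i ∈ P := P.min'_mem hP
  set A := s.filter (fun v => f v ≤ i) with hAdef
  have hAk : A.card = k := by
    have hge : k ≤ A.card := by
      have := hiP; simp only [hPdef, mem_filter] at this; exact this.2
    rcases Nat.eq_zero_or_pos i.val with hi0 | hipos
    · have hsub : A ⊆ {f.symm i} := by
        intro v hv
        simp only [hAdef, mem_filter] at hv
        have : f v = i := le_antisymm hv.2 (by rw [Fin.le_def, hi0]; omega)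
        simp [← this]
      have := (card_le_card hsub).trans_eq (card_singleton _)
      omega
    · set i' : Fin (Fintype.card V) := ⟨i.val - 1, by omega⟩ with hi'def
      have hi'P : i' ∉ P := by
        intro h
        have := P.min'_le i' h
        rw [← hidef, Fin.le_def] at this
        simp only [hi'def] at this
        omega
      have hcard' : (s.filter (fun v => f v ≤ i')).card < k := by
        by_contra h
        exact hi'P (by simp only [hPdef, mem_filter, mem_univ, true_and]; omega)
      have hsub : A ⊆ (s.filter (fun v => f v ≤ i')) ∪ {f.symm i} := by
        intro v hv
        simp only [hAdef, mem_filter] at hv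
        rcases eq_or_lt_of_le hv.2 with heq | hlt
        · simp [← heq]
        · apply mem_union_left
          simp only [mem_filter]
          refine ⟨hv.1, ?_⟩
          rw [Fin.le_def]
          rw [Fin.lt_def] at hlt
          simp only [hi'def]
          omega
      have := (card_le_card hsub).trans (card_union_le _ _)
      rw [card_singleton] at this
      omega
  set N : V → Finset V := fun v => s.filter (fun w => G.Adj v w ∧ i < f w) with hNdef
  have hNcard : ∀ v ∈ A, d + 1 - k ≤ (N v).card := by
    intro v hv
    have hvs : v ∈ s := by
      have := hv; simp only [hAdef, mem_filter] at this; exact this.1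
    have hsub : s.filter (G.Adj v) ⊆ A.erase v ∪ N v := by
      intro w hw
      simp only [mem_filter] at hw
      rcases le_or_gt (f w) i with hle | hlt
      · apply mem_union_left
        refine mem_erase.mpr ⟨fun h => G.irrefl (h ▸ hw.2), ?_⟩
        simp only [hAdef, mem_filter]; exact ⟨hw.1, hle⟩
      · apply mem_union_right
        simp only [hNdef, mem_filter]; exact ⟨hw.1, hw.2, hlt⟩
    have h1 := (hdeg v hvs).trans ((card_le_card hsub).trans (card_union_le _ _))
    have h2 : (A.erase v).card = k - 1 := by
      rw [card_erase_of_mem hv, hAk]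
    omega
  set E : Finset (Sym2 V) := A.biUnion (fun v => (N v).image (fun w => s(v, w))) with hEdef
  have hdisj : ∀ v ∈ A, ∀ v' ∈ A, v ≠ v' →
      Disjoint ((N v).image (fun w => s(v, w))) ((N v').image (fun w => s(v', w))) := by
    intro v hv v' hv' hne
    rw [disjoint_left]
    intro e he he'
    simp only [mem_image] at he he'
    obtain ⟨w, hw, rfl⟩ := he
    obtain ⟨w', hw', heq⟩ := he'
    rw [Sym2.eq_iff] at heq
    simp only [hNdef, mem_filter] at hw hw'
    have hv'A : f v' ≤ i := by
      have := hv'; simp only [hAdef, mem_filter] at this; exact this.2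
    rcases heq with ⟨h1, h2⟩ | ⟨h1, h2⟩
    · exact hne h1.symm
    · rw [h1] at hv'A
      exact absurd hv'A (not_le.mpr hw.2.2)
  have hcardE : E.card = ∑ v ∈ A, ((N v).image (fun w => s(v, w))).card :=
    card_biUnion hdisj
  have himgcard : ∀ v ∈ A, ((N v).image (fun w => s(v, w))).card = (N v).card := by
    intro v hv
    apply card_image_of_injOn
    intro w hw w' hw' heq
    simp only [mem_coe, hNdef, mem_filter] at hw hw'
    rw [Sym2.eq_iff] at heq
    rcases heq with ⟨_, h⟩ | ⟨h1, h2⟩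
    · exact h
    · exact absurd (h1 ▸ hw'.2.1) (G.irrefl)
  have hEsub : E ⊆ G.edgeFinset.filter (fun e => ∃ u ∈ e, ∃ v ∈ e, f u ≤ i ∧ i < f v) := by
    intro e he
    simp only [hEdef, mem_biUnion, mem_image] at he
    obtain ⟨v, hv, w, hw, rfl⟩ := he
    simp only [hNdef, mem_filter] at hw
    have hvA : f v ≤ i := by
      have := hv; simp only [hAdef, mem_filter] at this; exact this.2
    rw [mem_filter]
    refine ⟨SimpleGraph.mem_edgeFinset.mpr hw.2.1, v, ?_, w, ?_, hvA, hw.2.2⟩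
    · exact Sym2.mem_mk_left _ _
    · exact Sym2.mem_mk_right _ _
  refine ⟨i, ?_⟩
  have hfinal : k * (d + 1 - k) ≤ E.card := by
    rw [hcardE]
    calc k * (d + 1 - k) = ∑ _v ∈ A, (d + 1 - k) := by rw [sum_const, hAk, smul_eq_mul]
    _ ≤ ∑ v ∈ A, ((N v).image (fun w => s(v, w))).card := by
        apply sum_le_sum
        intro v hv
        rw [himgcard v hv]
        exact hNcard v hv
  exact hfinal.trans (card_le_card hEsub)

/-- **Corollary.** For every finite simple graph `G`, `cw(G) ≥ δ(G)²/4 + δ(G)/2`. -/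
theorem cutwidth_ge_degeneracy_sq [Fintype V] [DecidableEq V]
    (G : SimpleGraph V) [DecidableRel G.Adj] :
    (G.cutwidth : ℝ) ≥ (G.degeneracy : ℝ) ^ 2 / 4 + (G.degeneracy : ℝ) / 2 := by
  classical
  set d := G.degeneracy with hd
  rcases Nat.eq_zero_or_pos d with h0 | hdpos
  · rw [h0]
    simp
  -- there is a subgraph of min degree ≥ d
  have hS : ∃ s : Finset V, s.Nonempty ∧ ∀ v ∈ s, d ≤ (s.filter (G.Adj v)).card := by
    have hbdd : BddAbove {k | ∃ s : Finset V, s.Nonempty ∧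
        ∀ v ∈ s, k ≤ (s.filter (G.Adj v)).card} := by
      refine ⟨Fintype.card V, ?_⟩
      rintro k ⟨s, hs, h⟩
      obtain ⟨v, hv⟩ := hs
      calc k ≤ (s.filter (G.Adj v)).card := h v hv
      _ ≤ s.card := card_filter_le _ _
      _ ≤ Fintype.card V := s.card_le_univ.trans_eq (by simp)
    have hne : {k | ∃ s : Finset V, s.Nonempty ∧
        ∀ v ∈ s, k ≤ (s.filter (G.Adj v)).card}.Nonempty := by
      by_contra h
      rw [Set.not_nonempty_iff_eq_empty] at h
      have : d = 0 := by
        rw [hd, SimpleGraph.degeneracy, h, csSup_empty]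
        rfl
      omega
    exact Nat.sSup_mem hne hbdd
  obtain ⟨s, hs, hdeg⟩ := hS
  -- the optimal ordering
  have hcwmem : G.cutwidth ∈ { m | ∃ f : V ≃ Fin (Fintype.card V),
      m = Finset.univ.sup (fun i => G.cutAt f i) } := by
    apply Nat.sInf_mem
    exact ⟨_, Fintype.equivFin V, rfl⟩
  obtain ⟨f, hf⟩ := hcwmem
  set k := (d + 1) / 2 with hk
  have hk1 : 1 ≤ k := by omega
  have hkd : k ≤ d := by omega
  obtain ⟨i, hi⟩ := key_cut G s hs d k hk1 hkd hdeg f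
  have hcw : k * (d + 1 - k) ≤ G.cutwidth := by
    rw [hf]
    exact hi.trans (Finset.le_sup (mem_univ i))
  -- arithmetic
  have harith : d * d + 2 * d ≤ 4 * (k * (d + 1 - k)) := by
    rcases Nat.even_or_odd d with ⟨m, hm⟩ | ⟨m, hm⟩
    · have hkm : k = m := by omega
      have h1 : d + 1 - k = m + 1 := by omega
      rw [h1, hkm, hm]
      nlinarith []
    · have hkm : k = m + 1 := by omega
      have h1 : d + 1 - k = m + 1 := by omega
      rw [h1, hkm, hm]
      nlinarith []
  have hfinal : d * d + 2 * d ≤ 4 * G.cutwidth := by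
    calc d * d + 2 * d ≤ 4 * (k * (d + 1 - k)) := harith
    _ ≤ 4 * G.cutwidth := by omega
  have := Nat.cast_le (α := ℝ) |>.mpr hfinal
  push_cast at this
  rw [ge_iff_le]
  nlinarith [this]
end

section
/- For every finite simple graph G containing no triangle (no subgraph isomorphic to K₃), the cutwidth satisfies cw(G) ≥ δ(G)²/2, where δ(G) is the degeneracy of G. -/
open Finset

variable {V : Type*}

/-! Let `s` witness the degeneracy `k`: every vertex of `s` has at least `k` neighbours in `s`.
In any ordering, cut just after the `k`-th vertex of `s` and let `L` be the first `k` vertices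
of `s`. The neighbours in `s` of a vertex of `L` that are not in `L` lie beyond the cut, so at least
`k² - 2 e(L)` edges cross it; since `L` is triangle-free, Mantel's theorem gives `e(L) ≤ k²/4`, so at
least `k²/2` edges cross the cut. -/

namespace Finset

theorem exists_mem_card_filter_le_eq {α : Type*} [LinearOrder α] (t : Finset α) {k : ℕ}
    (hk₀ : 0 < k) (hk : k ≤ #t) : ∃ p ∈ t, #{q ∈ t | q ≤ p} = k := by
  induction t using Finset.induction_on_max with
  | empty => simp at hk; omega
  | insert a t hlt ih =>
    by_cases hkt : k ≤ #t
    · obtain ⟨p, hp, hcard⟩ := ih hkt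
      refine ⟨p, mem_insert_of_mem hp, ?_⟩
      rw [filter_insert, if_neg (not_le.2 (hlt p hp)), hcard]
    · have ha : a ∉ t := fun ha => lt_irrefl a (hlt a ha)
      refine ⟨a, mem_insert_self a t, ?_⟩
      rw [filter_true_of_mem fun q hq => ?_]
      · rw [card_insert_of_notMem ha] at hk ⊢
        omega
      · rcases mem_insert.1 hq with rfl | hq
        exacts [le_rfl, (hlt q hq).le]

end Finset

namespace SimpleGraph

variable {G : SimpleGraph V} [DecidableRel G.Adj]

theorem CliqueFree.two_mul_sum_card_filter_adj_le_sq (hG : G.CliqueFree 3) (L : Finset V) :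
    2 * ∑ u ∈ L, #{v ∈ L | G.Adj u v} ≤ #L ^ 2 := by
  set H := G.induce (L : Set V)
  have hH : H.CliqueFree 3 := hG.comap (Embedding.induce _).isContained
  have hdeg : ∑ u ∈ L, #{v ∈ L | G.Adj u v} = ∑ v, H.degree v := by
    rw [← sum_coe_sort L]
    refine sum_congr rfl fun u _ => ?_
    rw [← card_neighborFinset_eq_degree, ← card_map (Function.Embedding.subtype _)]
    congr 1
    ext v
    simp [H, and_comm]
  have hmantel := hH.card_edgeFinset_le (r := 2)
  simp only [SetLike.coe_sort_coe, Fintype.card_coe, Nat.add_one_sub_one, mul_one,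
    Nat.reduceMul] at hmantel
  rw [Nat.choose_eq_zero_of_lt (Nat.mod_lt _ two_pos)] at hmantel
  rw [hdeg, H.sum_degrees_eq_twice_card_edges]
  generalize #L ^ 2 = m at hmantel ⊢
  omega

variable [Fintype V] [DecidableEq V]

theorem sum_card_filter_adj_le_cutAt (f : V ≃ Fin (Fintype.card V)) (p : Fin (Fintype.card V))
    {A B : Finset V} (hA : ∀ u ∈ A, f u ≤ p) (hB : ∀ w ∈ B, p < f w) :
    ∑ u ∈ A, #{w ∈ B | G.Adj u w} ≤ G.cutAt f p := by
  rw [← card_sigma]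
  refine card_le_card_of_injOn (fun x => s(x.1, x.2)) (fun x hx => ?_) fun x hx y hy hxy => ?_
  · simp only [mem_coe, mem_sigma, mem_filter] at hx
    exact mem_filter.2 ⟨mem_edgeFinset.2 hx.2.2, x.1, Sym2.mem_mk_left _ _, x.2,
      Sym2.mem_mk_right _ _, hA _ hx.1, hB _ hx.2.1⟩
  · simp only [mem_coe, mem_sigma, mem_filter] at hx hy
    rcases Sym2.eq_iff.1 hxy with ⟨h₁, h₂⟩ | ⟨h₁, -⟩
    · exact Sigma.ext h₁ (heq_of_eq h₂)
    · exact absurd ((hB _ hy.2.1).trans_le (h₁ ▸ hA _ hx.1)) (lt_irrefl _)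

theorem CliqueFree.sq_le_two_mul_sup_cutAt (hG : G.CliqueFree 3) (f : V ≃ Fin (Fintype.card V))
    {s : Finset V} (hs : s.Nonempty) {k : ℕ}
    (hk : ∀ v ∈ s, k ≤ #{w ∈ s | G.Adj v w}) :
    k ^ 2 ≤ 2 * univ.sup (G.cutAt f) := by
  rcases k.eq_zero_or_pos with rfl | hk₀
  · simp
  obtain ⟨v₀, hv₀⟩ := hs
  obtain ⟨p, -, hp⟩ := (s.map f.toEmbedding).exists_mem_card_filter_le_eq hk₀
    (by simpa using (hk v₀ hv₀).trans (card_filter_le _ _))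
  set L := {v ∈ s | f v ≤ p}
  set R := {v ∈ s | ¬f v ≤ p}
  have hL : #L = k := by rwa [filter_map, card_map] at hp
  have hsplit : ∀ u, #{w ∈ s | G.Adj u w} = #{w ∈ L | G.Adj u w} + #{w ∈ R | G.Adj u w} := by
    intro u
    rw [← card_filter_add_card_filter_not (fun w => f w ≤ p)]
    congr 1 <;> exact congrArg card (filter_comm _ _ _)
  have hcross : ∑ u ∈ L, #{w ∈ R | G.Adj u w} ≤ G.cutAt f p :=
    sum_card_filter_adj_le_cutAt f p (fun u hu => (mem_filter.1 hu).2)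
      fun w hw => not_le.1 (mem_filter.1 hw).2
  have hdeg : k ^ 2 ≤ ∑ u ∈ L, #{w ∈ L | G.Adj u w} + ∑ u ∈ L, #{w ∈ R | G.Adj u w} :=
    calc k ^ 2 = ∑ _u ∈ L, k := by simp [hL, sq]
      _ ≤ ∑ u ∈ L, #{w ∈ s | G.Adj u w} := sum_le_sum fun u hu => hk u (mem_filter.1 hu).1
      _ = _ := by rw [← sum_add_distrib]; exact sum_congr rfl fun u _ => hsplit u
  have hmantel := hG.two_mul_sum_card_filter_adj_le_sq L
  have hsup := le_sup (f := G.cutAt f) (mem_univ p)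
  rw [hL] at hmantel
  linarith

theorem exists_nonempty_forall_degeneracy_le (h : G.degeneracy ≠ 0) :
    ∃ s : Finset V, s.Nonempty ∧ ∀ v ∈ s, G.degeneracy ≤ #{w ∈ s | G.Adj v w} := by
  refine show G.degeneracy ∈ {k | ∃ s : Finset V, s.Nonempty ∧ ∀ v ∈ s, k ≤ #{w ∈ s | G.Adj v w}}
    from Nat.sSup_mem (Set.nonempty_iff_ne_empty.2 fun he => h ?_) ⟨Fintype.card V, ?_⟩
  · rw [degeneracy, he, csSup_empty]
    rfl
  · rintro k ⟨s, ⟨v, hv⟩, hk⟩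
    exact (hk v hv).trans ((card_filter_le _ _).trans (card_le_univ s))

end SimpleGraph

/-- **Corollary.** For every triangle-free finite simple graph `G`, `cw(G) ≥ δ(G)²/2`. -/
theorem cutwidth_ge_of_triangleFree [Fintype V] [DecidableEq V]
    (G : SimpleGraph V) [DecidableRel G.Adj] (htf : G.CliqueFree 3) :
    (G.cutwidth : ℝ) ≥ (G.degeneracy : ℝ) ^ 2 / 2 := by
  obtain ⟨f, hf⟩ : G.cutwidth ∈ _ := Nat.sInf_mem ⟨_, Fintype.equivFin V, rfl⟩
  rcases eq_or_ne G.degeneracy 0 with h | h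
  · simp [h]
  obtain ⟨s, hs, hdeg⟩ := SimpleGraph.exists_nonempty_forall_degeneracy_le h
  have hcut : G.degeneracy ^ 2 ≤ 2 * G.cutwidth := hf ▸ htf.sq_le_two_mul_sup_cutAt f hs hdeg
  rw [ge_iff_le, div_le_iff₀ two_pos]
  exact_mod_cast hcut.trans_eq (mul_comm _ _)
end

section
/- Let n ≥ 1 and k ≥ 2 be integers, and let T(n,k) be the graph on vertex set {1, 2, …, n} in which distinct vertices a and b are adjacent if and only if a ≢ b (mod k). Then the cutwidth of T(n,k) satisfies cw(T(n,k)) ≤ ((k−1)/k)·n²/4 + n/2 + k/(4(k−1)). -/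
open Finset

variable {V : Type*}

/-- The graph on `{1,…,n}` (realized as `Fin n`, vertex `j : Fin n` standing for `j+1`) where
distinct `a`, `b` are adjacent iff `a ≢ b (mod k)`; note `a ≢ b (mod k) ↔ a−1 ≢ b−1 (mod k)`,
so taking residues of the `Fin`-values is equivalent. It is isomorphic to the Turán graph. -/
def turanMod (n k : ℕ) : SimpleGraph (Fin n) where
  Adj a b := (a : ℕ) % k ≠ (b : ℕ) % k
  symm := ⟨fun a b h => h.symm⟩
  loopless := ⟨fun a h => h rfl⟩

instance (n k : ℕ) : DecidableRel (turanMod n k).Adj :=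
  fun a b => inferInstanceAs (Decidable ((a : ℕ) % k ≠ (b : ℕ) % k))

/-!
Order the vertices as `0 < 1 < ⋯ < n - 1`. The cut after the first `m` vertices is crossed by
`m r - ∑ⱼ aⱼ bⱼ` edges, where `r = n - m` and `aⱼ`, `bⱼ` count the vertices of residue `j` before
and after the cut. Each `aⱼ` is `q` or `q + 1` and each `bⱼ` is `q'` or `q' + 1`, where `q = m / k`,
`q' = r / k`; so `(aⱼ - α) (bⱼ - β) ≥ 0` both for `(α, β) = (q, q')` and for `(q + 1, q' + 1)`.
Summing over `j` bounds `k (m r - ∑ⱼ aⱼ bⱼ) - (k - 1) m r` by `x y` and by `(k - x) (k - y)`, where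
`x = m - k q`, `y = r - k q'`; the smaller of the two is at most `k (x + y) / 4 ≤ k n / 4`, and
`m r ≤ n² / 4`.
-/

namespace SimpleGraph

variable [Fintype V] [DecidableEq V] (G : SimpleGraph V) [DecidableRel G.Adj]

theorem cutwidth_le_of_forall_cutAt_le (f : V ≃ Fin (Fintype.card V)) {c : ℕ}
    (h : ∀ i, G.cutAt f i ≤ c) : G.cutwidth ≤ c :=
  (Nat.sInf_le (by exact ⟨f, rfl⟩)).trans (Finset.sup_le fun i _ => h i)

theorem cutAt_le_card_adj (f : V ≃ Fin (Fintype.card V)) (i : Fin (Fintype.card V)) :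
    G.cutAt f i ≤ #{p : V × V | f p.1 ≤ i ∧ i < f p.2 ∧ G.Adj p.1 p.2} := by
  refine card_le_card_of_surjOn (fun p => s(p.1, p.2)) fun e he => ?_
  obtain ⟨he, u, hu, v, hv, hui, hiv⟩ := mem_filter.1 (mem_coe.1 he)
  have huv : u ≠ v := by rintro rfl; exact hui.not_gt hiv
  obtain rfl : e = s(u, v) := (Sym2.mem_and_mem_iff huv).1 ⟨hu, hv⟩
  exact ⟨(u, v), by simpa [hui, hiv] using G.mem_edgeFinset.1 he, rfl⟩

end SimpleGraph

theorem card_filter_ne_add_sum_card_mul_card {α β : Type*} [DecidableEq β] (A B : Finset α)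
    (c : α → β) {t : Finset β} (hA : ∀ x ∈ A, c x ∈ t) :
    #{p ∈ A ×ˢ B | c p.1 ≠ c p.2} + ∑ j ∈ t, #{x ∈ A | c x = j} * #{x ∈ B | c x = j} =
      #A * #B := by
  rw [← card_product, ← card_filter_add_card_filter_not (s := A ×ˢ B) (fun p => c p.1 ≠ c p.2),
    card_eq_sum_card_fiberwise (s := {p ∈ A ×ˢ B | ¬c p.1 ≠ c p.2}) (f := fun p => c p.1) (t := t)
      fun p hp => hA _ (mem_product.1 (mem_filter.1 hp).1).1]
  congr 1
  refine sum_congr rfl fun j _ => ?_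
  rw [← card_product]
  congr 1
  ext ⟨a, b⟩
  simp only [mem_filter, mem_product, not_not]
  constructor
  · rintro ⟨⟨ha, rfl⟩, hb, hab⟩; exact ⟨⟨⟨ha, hb⟩, hab.symm⟩, rfl⟩
  · rintro ⟨⟨⟨ha, hb⟩, hab⟩, rfl⟩; exact ⟨⟨ha, rfl⟩, hb, hab.symm⟩

theorem Nat.card_filter_mod_eq_Ico_bounds (a r : ℕ) {k j : ℕ} (hj : j < k) :
    r / k ≤ #{x ∈ Ico a (a + r) | x % k = j} ∧ #{x ∈ Ico a (a + r) | x % k = j} ≤ r / k + 1 := by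
  have hcard := Nat.Ico_filter_modEq_card a (a + r) (Nat.zero_lt_of_lt hj) j
  simp only [Nat.ModEq, Nat.mod_eq_of_lt hj] at hcard
  set x : ℚ := ((a : ℚ) - j) / k
  set y : ℚ := (r : ℚ) / k
  have hxy : (((a + r : ℕ) : ℚ) - j) / k = x + y := by push_cast; ring
  have hfloor : ⌊y⌋ = ((r / k : ℕ) : ℤ) := by simp [y, Rat.floor_natCast_div_natCast]
  have hlow : ⌈x⌉ + ⌊y⌋ ≤ ⌈x + y⌉ := by
    rw [← Int.ceil_add_intCast]; exact Int.ceil_mono (by linarith [Int.floor_le y])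
  have hupp : ⌈x + y⌉ ≤ ⌈x⌉ + ⌊y⌋ + 1 := by
    linarith [Int.ceil_add_le x y, Int.ceil_le_floor_add_one y]
  rw [hxy] at hcard
  generalize r / k = q at hfloor ⊢
  omega

theorem le_sum_mul_of_forall_sub_mul_sub_nonneg {ι : Type*} (s : Finset ι) (a b : ι → ℝ)
    (α β : ℝ) (h : ∀ j ∈ s, 0 ≤ (a j - α) * (b j - β)) :
    β * ∑ j ∈ s, a j + α * ∑ j ∈ s, b j - #s * α * β ≤ ∑ j ∈ s, a j * b j := by
  have := sum_nonneg h
  simp only [sub_mul, mul_sub, sum_sub_distrib, ← sum_mul, ← mul_sum, sum_const,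
    nsmul_eq_mul] at this
  linarith

theorem min_mul_mul_sub_le {k x y : ℝ} (hx : 0 ≤ x) (hxk : x ≤ k) (hy : 0 ≤ y) (hyk : y ≤ k) :
    min (x * y) ((k - x) * (k - y)) ≤ k * (x + y) / 4 := by
  rcases le_total (x + y) k with h | h
  · exact (min_le_left _ _).trans (by nlinarith [sq_nonneg (x - y)])
  · exact (min_le_right _ _).trans (by nlinarith [sq_nonneg (x - y)])

theorem sum_mul_sum_sub_sum_mul_le {ι : Type*} (s : Finset ι) (a b : ι → ℝ) {q q' : ℝ}
    (hq : 0 ≤ q) (hq' : 0 ≤ q') (ha : ∀ j ∈ s, q ≤ a j ∧ a j ≤ q + 1)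
    (hb : ∀ j ∈ s, q' ≤ b j ∧ b j ≤ q' + 1) :
    (∑ j ∈ s, a j) * ∑ j ∈ s, b j - ∑ j ∈ s, a j * b j ≤
      (#s - 1) / #s * (∑ j ∈ s, a j + ∑ j ∈ s, b j) ^ 2 / 4 +
        (∑ j ∈ s, a j + ∑ j ∈ s, b j) / 4 := by
  rcases s.eq_empty_or_nonempty with rfl | hne
  · simp
  have hk : (1 : ℝ) ≤ #s := by exact_mod_cast hne.card_pos
  have hm₁ := card_nsmul_le_sum s a q fun j hj => (ha j hj).1
  have hm₂ := sum_le_card_nsmul s a (q + 1) fun j hj => (ha j hj).2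
  have hr₁ := card_nsmul_le_sum s b q' fun j hj => (hb j hj).1
  have hr₂ := sum_le_card_nsmul s b (q' + 1) fun j hj => (hb j hj).2
  have h₁ := le_sum_mul_of_forall_sub_mul_sub_nonneg s a b q q' fun j hj =>
    mul_nonneg (sub_nonneg.2 (ha j hj).1) (sub_nonneg.2 (hb j hj).1)
  have h₂ := le_sum_mul_of_forall_sub_mul_sub_nonneg s a b (q + 1) (q' + 1) fun j hj =>
    mul_nonneg_of_nonpos_of_nonpos (sub_nonpos.2 (ha j hj).2) (sub_nonpos.2 (hb j hj).2)
  simp only [nsmul_eq_mul] at hm₁ hm₂ hr₁ hr₂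
  generalize ∑ j ∈ s, a j * b j = P at *
  generalize ∑ j ∈ s, a j = m at *
  generalize ∑ j ∈ s, b j = r at *
  generalize (#s : ℝ) = k at *
  have hk₀ : 0 < k := by linarith
  have e₁ : k * (m * r - P) ≤ (k - 1) * (m * r) + (m - k * q) * (r - k * q') := by
    nlinarith [mul_le_mul_of_nonneg_left h₁ hk₀.le]
  have e₂ : k * (m * r - P) ≤ (k - 1) * (m * r) + (k - (m - k * q)) * (k - (r - k * q')) := by
    nlinarith [mul_le_mul_of_nonneg_left h₂ hk₀.le]
  have hmin := min_mul_mul_sub_le (sub_nonneg.2 hm₁) (by linarith : m - k * q ≤ k)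
    (sub_nonneg.2 hr₁) (by linarith : r - k * q' ≤ k)
  rw [show (k - 1) / k * (m + r) ^ 2 / 4 + (m + r) / 4 =
      ((k - 1) * (m + r) ^ 2 / 4 + k * (m + r) / 4) / k by field_simp, le_div_iff₀ hk₀]
  calc (m * r - P) * k
      ≤ (k - 1) * (m * r) +
          min ((m - k * q) * (r - k * q')) ((k - (m - k * q)) * (k - (r - k * q'))) := by
        rw [mul_comm, ← sub_le_iff_le_add', le_min_iff]; constructor <;> linarith
    _ ≤ (k - 1) * (m * r) + k * ((m - k * q) + (r - k * q')) / 4 := by gcongr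
    _ ≤ (k - 1) * (m + r) ^ 2 / 4 + k * (m + r) / 4 := by
        nlinarith [mul_nonneg (sub_nonneg.2 hk) (sq_nonneg (m - r)),
          mul_nonneg hk₀.le (mul_nonneg hk₀.le hq), mul_nonneg hk₀.le (mul_nonneg hk₀.le hq')]

theorem card_filter_mod_ne_range_Ico_le {m n k : ℕ} (hmn : m ≤ n) (hk : 0 < k) :
    (#{p ∈ range m ×ˢ Ico m n | p.1 % k ≠ p.2 % k} : ℝ) ≤
      ((k : ℝ) - 1) / k * (n : ℝ) ^ 2 / 4 + (n : ℝ) / 4 := by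
  obtain ⟨r, rfl⟩ := Nat.exists_eq_add_of_le hmn
  have hsplit := card_filter_ne_add_sum_card_mul_card (range m) (Ico m (m + r)) (· % k)
    (t := range k) fun x _ => mem_range.2 (Nat.mod_lt x hk)
  rw [card_range, Nat.card_Ico, Nat.add_sub_cancel_left] at hsplit
  have hsum (A : Finset ℕ) : ∑ j ∈ range k, (#{x ∈ A | x % k = j} : ℝ) = #A := by
    exact_mod_cast (card_eq_sum_card_fiberwise fun x _ => mem_range.2 (Nat.mod_lt x hk)).symm
  have hbound := sum_mul_sum_sub_sum_mul_le (range k)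
    (fun j => (#{x ∈ range m | x % k = j} : ℝ)) (fun j => (#{x ∈ Ico m (m + r) | x % k = j} : ℝ))
    (q := (m / k : ℕ)) (q' := (r / k : ℕ)) (Nat.cast_nonneg _) (Nat.cast_nonneg _)
    (fun j hj => ?_) (fun j hj => ?_)
  · rw [hsum, hsum, card_range, card_range, Nat.card_Ico, Nat.add_sub_cancel_left] at hbound
    have hcross : (#{p ∈ range m ×ˢ Ico m (m + r) | p.1 % k ≠ p.2 % k} : ℝ) = m * r -
        ∑ j ∈ range k, (#{x ∈ range m | x % k = j} : ℝ) * #{x ∈ Ico m (m + r) | x % k = j} := by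
      rw [eq_sub_iff_add_eq]; exact_mod_cast hsplit
    rw [hcross]
    exact_mod_cast hbound
  · have := Nat.card_filter_mod_eq_Ico_bounds 0 m (mem_range.1 hj)
    rw [zero_add, ← range_eq_Ico] at this
    exact ⟨by exact_mod_cast this.1, by exact_mod_cast this.2⟩
  · have := Nat.card_filter_mod_eq_Ico_bounds m r (mem_range.1 hj)
    exact ⟨by exact_mod_cast this.1, by exact_mod_cast this.2⟩

theorem turanMod_cutAt_le (n k : ℕ) (i : Fin (Fintype.card (Fin n))) :
    (turanMod n k).cutAt (finCongr (Fintype.card_fin n).symm) i ≤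
      #{p ∈ range ((i : ℕ) + 1) ×ˢ Ico ((i : ℕ) + 1) n | p.1 % k ≠ p.2 % k} := by
  refine ((turanMod n k).cutAt_le_card_adj _ i).trans <|
    card_le_card_of_injOn (Prod.map Fin.val Fin.val) (fun p hp => ?_)
      (Fin.val_injective.prodMap Fin.val_injective).injOn
  simp only [coe_filter, mem_univ, true_and, Set.mem_ofPred_eq, finCongr_apply, Fin.le_def,
    Fin.lt_def, Fin.val_cast] at hp
  simp only [coe_filter, mem_product, mem_range, mem_Ico, Set.mem_ofPred_eq, Prod.map_fst,
    Prod.map_snd]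
  exact ⟨⟨by omega, by omega, p.2.isLt⟩, hp.2.2⟩

theorem turanMod_cutwidth_le_of_pos (n : ℕ) {k : ℕ} (hk : 0 < k) :
    ((turanMod n k).cutwidth : ℝ) ≤ ((k : ℝ) - 1) / k * (n : ℝ) ^ 2 / 4 + (n : ℝ) / 4 := by
  have hk' : (1 : ℝ) ≤ k := by exact_mod_cast hk
  have hbound : 0 ≤ ((k : ℝ) - 1) / k * (n : ℝ) ^ 2 / 4 + (n : ℝ) / 4 := by
    have : 0 ≤ ((k : ℝ) - 1) / k := div_nonneg (by linarith) (by linarith)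
    positivity
  refine (Nat.cast_le.2 <| (turanMod n k).cutwidth_le_of_forall_cutAt_le
    (finCongr (Fintype.card_fin n).symm) fun i => ?_).trans
    (Nat.floor_le hbound)
  exact (turanMod_cutAt_le n k i).trans
    (Nat.le_floor (card_filter_mod_ne_range_Ico_le (i.isLt.trans_eq (Fintype.card_fin n)) hk))

theorem turanMod_cutwidth_le_general (n k : ℕ) (hk : 2 ≤ k) :
    ((turanMod n k).cutwidth : ℝ) ≤
      ((k : ℝ) - 1) / (k : ℝ) * (n : ℝ) ^ 2 / 4 + (n : ℝ) / 2
        + (k : ℝ) / (4 * ((k : ℝ) - 1)) := by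
  have hk' : (2 : ℝ) ≤ k := by exact_mod_cast hk
  have hslack : 0 ≤ (k : ℝ) / (4 * ((k : ℝ) - 1)) := div_nonneg (by linarith) (by linarith)
  have hn : (0 : ℝ) ≤ n := n.cast_nonneg
  linarith [turanMod_cutwidth_le_of_pos n (k := k) (by omega)]

/-- **Upper bound for the Turán-type graph.**
`cw(T(n,k)) ≤ ((k−1)/k) n²/4 + n/2 + k/(4(k−1))`. -/
theorem turanMod_cutwidth_le (n k : ℕ) (hn : 1 ≤ n) (hk : 2 ≤ k) :
    ((turanMod n k).cutwidth : ℝ) ≤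
      ((k : ℝ) - 1) / (k : ℝ) * (n : ℝ) ^ 2 / 4 + (n : ℝ) / 2
        + (k : ℝ) / (4 * ((k : ℝ) - 1)) :=
  turanMod_cutwidth_le_general n k hk
end

section
/- Let n ≥ 1 and k ≥ 2 be integers, and let T(n,k) be the graph on vertex set {1, 2, …, n} in which distinct vertices a and b are adjacent if and only if a ≢ b (mod k). Then the cutwidth of T(n,k) satisfies cw(T(n,k)) ≥ ((k−1)/k)·n²/4 − n/2 − 3k/(4(k−1)). -/
open Finset

variable {V : Type*}

/-! In any ordering of `T(n,k)`, look at the cut after the first `m = ⌊n/2⌋` vertices. Of the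
`m (n - m) ≥ (n² - 1)/4` pairs across it, only those inside a residue class mod `k` are not edges.
A residue class has `c ≤ ⌊n/k⌋ + 1` elements; if it is split as `a + b` by the cut, it contributes
`ab ≤ c²/4 ≤ (⌊n/k⌋ + 1) c / 4` non-edges, so at most `(⌊n/k⌋ + 1) n / 4` pairs across the cut are
missing. -/

section Ordering

variable [Fintype V] (f : V ≃ Fin (Fintype.card V))

def orderPrefix (m : ℕ) : Finset V := univ.filter fun v => (f v : ℕ) < m

def orderSuffix (m : ℕ) : Finset V := univ.filter fun v => m ≤ (f v : ℕ)

theorem card_orderPrefix {m : ℕ} (hm : m ≤ Fintype.card V) : #(orderPrefix f m) = m := by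
  rw [orderPrefix, card_equiv f (t := univ.filter fun i : Fin (Fintype.card V) => (i : ℕ) < m)
    (by simp), Fin.card_filter_val_lt, min_eq_right hm]

theorem card_orderSuffix {m : ℕ} (hm : m ≤ Fintype.card V) :
    #(orderSuffix f m) = Fintype.card V - m := by
  have h := card_filter_add_card_filter_not (s := univ) (p := fun v => (f v : ℕ) < m)
  simp only [not_lt, card_univ] at h
  have hS := card_orderPrefix f hm
  rw [orderPrefix] at hS
  rw [orderSuffix]
  omega

theorem disjoint_orderPrefix_orderSuffix (m : ℕ) : Disjoint (orderPrefix f m) (orderSuffix f m) :=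
  disjoint_filter.2 fun _ _ h => not_le.2 h

end Ordering

namespace SimpleGraph

variable [Fintype V] [DecidableEq V] (G : SimpleGraph V) [DecidableRel G.Adj]

theorem exists_cutwidth_eq :
    ∃ f : V ≃ Fin (Fintype.card V), G.cutwidth = univ.sup (G.cutAt f) :=
  Nat.sInf_mem (s := {m | ∃ f : V ≃ Fin (Fintype.card V), m = univ.sup (G.cutAt f)})
     ⟨_, Fintype.equivFin V, rfl⟩

variable (f : V ≃ Fin (Fintype.card V)) {m : ℕ}

theorem card_adj_prefix_le_sup_cutAt (hm : m ≤ Fintype.card V) :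
    #{p ∈ orderPrefix f m ×ˢ orderSuffix f m | G.Adj p.1 p.2} ≤ univ.sup (G.cutAt f) := by
  rcases Nat.eq_zero_or_pos m with rfl | hm0
  · simp [orderPrefix]
  refine le_trans ?_ (le_sup (f := G.cutAt f) (mem_univ ⟨m - 1, by omega⟩))
  refine card_le_card_of_injOn (fun p => s(p.1, p.2)) ?_ ?_
  · rintro ⟨u, v⟩ h
    simp only [orderPrefix, orderSuffix, coe_filter, mem_product, mem_filter, mem_univ,
      true_and, Set.mem_ofPred_eq] at h
    simp only [coe_filter, mem_edgeFinset, Set.mem_ofPred_eq, Sym2.mem_iff,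
      exists_eq_or_imp, exists_eq_left, Fin.le_def, Fin.lt_def]
    exact ⟨h.2, .inl (.inr ⟨by omega, by omega⟩)⟩
  · rintro ⟨u, v⟩ huv ⟨u', v'⟩ huv' h
    simp only [orderPrefix, orderSuffix, coe_filter, mem_product, mem_filter, mem_univ,
      true_and, Set.mem_ofPred_eq] at huv huv'
    rcases Sym2.eq_iff.1 h with ⟨rfl, rfl⟩ | ⟨rfl, rfl⟩
    · rfl
    · exact absurd huv.1.1 (not_lt.2 huv'.1.2)

theorem mul_sub_le_sup_cutAt_add_card_not_adj (hm : m ≤ Fintype.card V) :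
    m * (Fintype.card V - m) ≤ univ.sup (G.cutAt f) +
      #{p ∈ orderPrefix f m ×ˢ orderSuffix f m | ¬G.Adj p.1 p.2} := by
  have h := card_filter_add_card_filter_not
    (s := orderPrefix f m ×ˢ orderSuffix f m) (p := fun p => G.Adj p.1 p.2)
  rw [card_product, card_orderPrefix f hm, card_orderSuffix f hm] at h
  rw [← h]
  exact Nat.add_le_add_right (G.card_adj_prefix_le_sup_cutAt f hm) _

end SimpleGraph

theorem Nat.four_mul_mul_le_mul_add {a b c : ℕ} (h : a + b ≤ c) : 4 * (a * b) ≤ c * (a + b) := by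
  nlinarith [sq_nonneg ((a : ℤ) - b)]

theorem four_mul_card_filter_eq_le {α ι : Type*} [Fintype α] [DecidableEq ι] (c : α → ι) {b : ℕ}
    (hb : ∀ j, #{x | c x = j} ≤ b) {S T : Finset α} (hST : Disjoint S T) :
    4 * #{p ∈ S ×ˢ T | c p.1 = c p.2} ≤ b * (#S + #T) := by
  classical
  set t := univ.image c
  have hct : ∀ x, c x ∈ t := fun x => mem_image_of_mem c (mem_univ x)
  have hpairs : #{p ∈ S ×ˢ T | c p.1 = c p.2} =
      ∑ j ∈ t, #{x ∈ S | c x = j} * #{x ∈ T | c x = j} := by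
    rw [card_eq_sum_card_fiberwise (f := fun p => c p.1) fun p _ => hct p.1]
    refine sum_congr rfl fun j _ => ?_
    rw [← card_product]
    congr 1
    ext ⟨u, v⟩
    simp only [mem_filter, mem_product]
    constructor
    · rintro ⟨⟨⟨hu, hv⟩, huv⟩, rfl⟩
      exact ⟨⟨hu, rfl⟩, hv, huv.symm⟩
    · rintro ⟨⟨hu, rfl⟩, hv, hvu⟩
      exact ⟨⟨⟨hu, hv⟩, hvu.symm⟩, rfl⟩
  have hcard : #S + #T = ∑ j ∈ t, (#{x ∈ S | c x = j} + #{x ∈ T | c x = j}) := by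
    rw [sum_add_distrib, card_eq_sum_card_fiberwise fun x _ => hct x,
      card_eq_sum_card_fiberwise fun x _ => hct x]
  rw [hpairs, hcard, mul_sum, mul_sum]
  refine sum_le_sum fun j _ => (Nat.four_mul_mul_le_mul_add ?_).trans (Nat.mul_le_mul_right _ (hb j))
  rw [← card_union_of_disjoint (hST.mono (filter_subset _ _) (filter_subset _ _)), ← filter_union]
  exact card_le_card (filter_subset_filter _ (subset_univ _))

theorem Fin.card_filter_val_mod_eq_le (n k j : ℕ) :
    #{x : Fin n | (x : ℕ) % k = j} ≤ n / k + 1 := by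
  rw [← card_range (n / k + 1)]
  refine card_le_card_of_injOn (fun x => (x : ℕ) / k) (fun x _ => ?_) fun x hx y hy hxy => ?_
  · simpa [Nat.lt_succ_iff] using Nat.div_le_div_right x.isLt.le
  · simp only [coe_filter, mem_univ, true_and, Set.mem_ofPred_eq] at hx hy
    have hxy : (x : ℕ) / k = y / k := hxy
    exact Fin.ext (by rw [← Nat.div_add_mod x k, ← Nat.div_add_mod y k, hxy, hx, hy])

theorem turanMod_four_mul_le_cutwidth (n k : ℕ) {m : ℕ} (hm : m ≤ n) :
    4 * (m * (n - m)) ≤ 4 * (turanMod n k).cutwidth + (n / k + 1) * n := by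
  obtain ⟨f, hf⟩ := (turanMod n k).exists_cutwidth_eq
  have hcard : Fintype.card (Fin n) = n := Fintype.card_fin n
  have hcut := (turanMod n k).mul_sub_le_sup_cutAt_add_card_not_adj f (hcard ▸ hm)
  have hsame := four_mul_card_filter_eq_le (fun x : Fin n => (x : ℕ) % k)
    (Fin.card_filter_val_mod_eq_le n k) (disjoint_orderPrefix_orderSuffix f m)
  have hST : #(orderPrefix f m) + #(orderSuffix f m) ≤ n := by
    rw [← card_union_of_disjoint (disjoint_orderPrefix_orderSuffix f m)]
    exact (card_le_univ _).trans_eq hcard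
  have hnonadj : ∀ u v : Fin n, ¬(turanMod n k).Adj u v ↔ (u : ℕ) % k = v % k :=
    fun _ _ => not_not
  simp only [hnonadj, hcard, ← hf] at hcut
  linarith [Nat.mul_le_mul_left (n / k + 1) hST]

theorem turanMod_cutwidth_ge_general (n k : ℕ) (hk : 2 ≤ k) :
    ((turanMod n k).cutwidth : ℝ) ≥
      ((k : ℝ) - 1) / (k : ℝ) * (n : ℝ) ^ 2 / 4 - (n : ℝ) / 2
        - 3 * (k : ℝ) / (4 * ((k : ℝ) - 1)) := by
  have hhalf : n * n ≤ 4 * (n / 2 * (n - n / 2)) + 1 := by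
    obtain ⟨m, r, hr, rfl⟩ : ∃ m r, r ≤ 1 ∧ n = 2 * m + r := ⟨n / 2, n % 2, by omega, by omega⟩
    rw [show (2 * m + r) / 2 = m by omega, show 2 * m + r - m = m + r by omega]
    nlinarith
  have hcut : (n : ℝ) * n ≤ 4 * (turanMod n k).cutwidth + ((n / k : ℕ) + 1) * n + 1 := by
    exact_mod_cast hhalf.trans
      (Nat.add_le_add_right (turanMod_four_mul_le_cutwidth n k (Nat.div_le_self n 2)) 1)
  have hdiv : ((n / k : ℕ) : ℝ) * n ≤ n / k * n :=
    mul_le_mul_of_nonneg_right Nat.cast_div_le n.cast_nonneg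
  have hk' : (2 : ℝ) ≤ k := by exact_mod_cast hk
  have hconst : 1 / 4 ≤ 3 * (k : ℝ) / (4 * ((k : ℝ) - 1)) := by
    rw [div_le_div_iff₀ (by norm_num) (by linarith)]
    linarith
  have hsplit : ((k : ℝ) - 1) / k * n ^ 2 / 4 = (n * n - n / k * n) / 4 := by
    field_simp
  rw [ge_iff_le, hsplit]
  linarith [n.cast_nonneg (α := ℝ)]

/-- **Lower bound for the Turán-type graph.**
`cw(T(n,k)) ≥ ((k−1)/k) n²/4 − n/2 − 3k/(4(k−1))`. -/
theorem turanMod_cutwidth_ge (n k : ℕ) (hn : 1 ≤ n) (hk : 2 ≤ k) :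
    ((turanMod n k).cutwidth : ℝ) ≥
      ((k : ℝ) - 1) / (k : ℝ) * (n : ℝ) ^ 2 / 4 - (n : ℝ) / 2
        - 3 * (k : ℝ) / (4 * ((k : ℝ) - 1)) :=
  turanMod_cutwidth_ge_general n k hk
end

section
/- Let n ≥ 1 and k ≥ 2 be integers, let T(n,k) be the graph on vertex set {1, 2, …, n} in which distinct vertices a and b are adjacent if and only if a ≢ b (mod k), and order the vertices by the natural order on {1,…,n}. Then for every i with 1 ≤ i ≤ n, the number of edges ab of T(n,k) with a ≤ i < b is at most i·((n−i)·(k−1)/k + 1). -/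
open Finset

theorem Nat.div_le_card_filter_Ico_modEq {k : ℕ} (hk : 0 < k) (a m v : ℕ) :
    m / k ≤ #{x ∈ Ico a (a + m) | x ≡ v [MOD k]} := by
  have hperiodic : Function.Periodic (· ≡ v [MOD k]) (k * (m / k)) := fun x => by
    simp [Nat.ModEq]
  calc m / k = #{x ∈ Ico a (a + k * (m / k)) | x ≡ v [MOD k]} := by
        rw [Nat.filter_Ico_card_eq_of_periodic _ _ _ hperiodic, Nat.count_modEq_card _ hk]
        simp [hk.ne']
    _ ≤ #{x ∈ Ico a (a + m) | x ≡ v [MOD k]} :=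
        card_le_card <| filter_subset_filter _ <| Ico_subset_Ico_right <| by
          have := Nat.mul_div_le m k
          omega

theorem Nat.card_filter_Ico_not_modEq_le {k : ℕ} (hk : 0 < k) (a m v : ℕ) :
    #{x ∈ Ico a (a + m) | ¬x ≡ v [MOD k]} ≤ m - m / k := by
  have hsplit := card_filter_add_card_filter_not (s := Ico a (a + m)) (· ≡ v [MOD k])
  have := Nat.div_le_card_filter_Ico_modEq hk a m v
  simp only [Nat.card_Ico, Nat.add_sub_cancel_left] at hsplit
  omega

theorem Nat.sub_div_le_mul_sub_one_div_add_one {k : ℕ} (hk : 0 < k) (m : ℕ) :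
    ((m - m / k : ℕ) : ℝ) ≤ m * ((k : ℝ) - 1) / k + 1 := by
  have hkR : (0 : ℝ) < k := by exact_mod_cast hk
  -- with `m = k q + r` and `r < k`, both sides differ by `1 - r / k ≥ 0`
  have hdecomp : (m : ℝ) = k * (m / k : ℕ) + (m % k : ℕ) := by
    exact_mod_cast (Nat.div_add_mod m k).symm
  have hrem : ((m % k : ℕ) : ℝ) ≤ k := by exact_mod_cast (Nat.mod_lt m hk).le
  rw [Nat.cast_sub (Nat.div_le_self m k), div_add_one hkR.ne', le_div_iff₀ hkR]
  nlinarith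

theorem SimpleGraph.card_filter_edgeFinset_le_sum_card_filter_neighborFinset {V : Type*}
    [Fintype V] [DecidableEq V] (G : SimpleGraph V) [DecidableRel G.Adj]
    (P Q : V → Prop) [DecidablePred P] [DecidablePred Q]
    [DecidablePred fun e : Sym2 V => ∃ u ∈ e, ∃ v ∈ e, P u ∧ Q v] (hPQ : ∀ v, P v → ¬Q v) :
    #{e ∈ G.edgeFinset | ∃ u ∈ e, ∃ v ∈ e, P u ∧ Q v}
      ≤ ∑ u ∈ univ.filter P, #{v ∈ G.neighborFinset u | Q v} := by
  calc #{e ∈ G.edgeFinset | ∃ u ∈ e, ∃ v ∈ e, P u ∧ Q v}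
      ≤ #((univ.filter P).biUnion fun u => {v ∈ G.neighborFinset u | Q v}.image (s(u, ·))) := by
        refine card_le_card fun e he => ?_
        obtain ⟨he, u, hu, v, hv, hPu, hQv⟩ := mem_filter.mp he
        have huv : u ≠ v := fun h => hPQ u hPu (h ▸ hQv)
        obtain rfl : e = s(u, v) :=
          Sym2.eq_of_ne_mem huv hu hv (Sym2.mem_mk_left u v) (Sym2.mem_mk_right u v)
        simp only [mem_biUnion, mem_image, mem_filter, mem_univ, true_and, mem_neighborFinset]
        exact ⟨u, hPu, v, ⟨G.mem_edgeFinset.mp he, hQv⟩, rfl⟩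
    _ ≤ ∑ u ∈ univ.filter P, #{v ∈ G.neighborFinset u | Q v} :=
        card_biUnion_le.trans <| sum_le_sum fun _ _ => card_image_le

theorem turanMod_card_filter_neighborFinset_le {n k : ℕ} (hk : 0 < k) {i : ℕ} (hin : i ≤ n)
    (u : Fin n) :
    #{v ∈ (turanMod n k).neighborFinset u | i ≤ v.val} ≤ (n - i) - (n - i) / k := by
  refine le_trans ?_ (Nat.card_filter_Ico_not_modEq_le hk i (n - i) u)
  refine card_le_card_of_injOn Fin.val (fun v hv => ?_) Fin.val_injective.injOn
  simp only [mem_coe, mem_filter, SimpleGraph.mem_neighborFinset] at hv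
  rw [mem_coe, mem_filter, mem_Ico]
  exact ⟨⟨hv.2, by omega⟩, Ne.symm hv.1⟩

theorem turanMod_cut_le_general (n k : ℕ) (hk : 2 ≤ k)
    (i : ℕ) (hin : i ≤ n) :
    ((((turanMod n k).edgeFinset).filter
        (fun e => ∃ u ∈ e, ∃ v ∈ e, u.val < i ∧ i ≤ v.val)).card : ℝ)
      ≤ (i : ℝ) * (((n : ℝ) - (i : ℝ)) * ((k : ℝ) - 1) / (k : ℝ) + 1) := by
  have hk0 : 0 < k := by omega
  have hcut : #{e ∈ (turanMod n k).edgeFinset | ∃ u ∈ e, ∃ v ∈ e, u.val < i ∧ i ≤ v.val}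
      ≤ i * ((n - i) - (n - i) / k) :=
    calc _ ≤ ∑ u ∈ univ.filter (fun u : Fin n => u.val < i),
          #{v ∈ (turanMod n k).neighborFinset u | i ≤ v.val} :=
          (turanMod n k).card_filter_edgeFinset_le_sum_card_filter_neighborFinset _ _
            fun _ h h' => by omega
      _ ≤ ∑ _u ∈ univ.filter (fun u : Fin n => u.val < i), ((n - i) - (n - i) / k) :=
          sum_le_sum fun u _ => turanMod_card_filter_neighborFinset_le hk0 hin u
      _ ≤ i * ((n - i) - (n - i) / k) := by
          rw [sum_const, smul_eq_mul, Fin.card_filter_val_lt]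
          exact Nat.mul_le_mul_right _ (min_le_right n i)
  calc _ ≤ ((i * ((n - i) - (n - i) / k) : ℕ) : ℝ) := by exact_mod_cast hcut
    _ ≤ _ := by
      rw [Nat.cast_mul, ← Nat.cast_sub hin]
      gcongr
      exact Nat.sub_div_le_mul_sub_one_div_add_one hk0 _

/-- **Lemma (cut counting for the Turán-type graph).** With the natural ordering of
`{1,…,n}` (vertex `j : Fin n` standing for `j+1`, so an edge `ab` crosses position `i` iff
`a ≤ i < b`, i.e. `(j_a : ℕ) < i ≤ (j_b : ℕ)`), the number of edges of `T(n,k)` crossing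
position `i` is at most `i((n−i)(k−1)/k + 1)`. -/
theorem turanMod_cut_le (n k : ℕ) (hn : 1 ≤ n) (hk : 2 ≤ k)
    (i : ℕ) (hi1 : 1 ≤ i) (hin : i ≤ n) :
    ((((turanMod n k).edgeFinset).filter
        (fun e => ∃ u ∈ e, ∃ v ∈ e, u.val < i ∧ i ≤ v.val)).card : ℝ)
      ≤ (i : ℝ) * (((n : ℝ) - (i : ℝ)) * ((k : ℝ) - 1) / (k : ℝ) + 1) :=
  turanMod_cut_le_general n k hk i hin
end

section
/- For every finite tree T (a finite connected acyclic simple graph), the circular cutwidth of T equals its cutwidth: ccw(T) = cw(T). -/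
open Finset

variable {V : Type*}

/-- A circular layout of `G`: an injective placement of the `n` vertices at the `n` points of
the cyclic group (realized as `Fin n` with its modular arithmetic), together with, for each
edge, a choice of an ordered representation of its endpoints — the edge is drawn along the
arc going (say) clockwise from the first endpoint to the second. -/
structure SimpleGraph.CircularLayout [Fintype V] [DecidableEq V] (G : SimpleGraph V)
    [DecidableRel G.Adj] where
  pos : V ≃ Fin (Fintype.card V)
  dir : Sym2 V → V × V
  hdir : ∀ e ∈ G.edgeFinset, s((dir e).1, (dir e).2) = e

/-- The width of a circular layout: the maximum, over the `n` gaps between cyclically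
consecutive points (gap `g` lies between points `g` and `g+1`), of the number of edges whose
chosen arc passes over that gap. The arc drawn clockwise from `x` to `y` passes over exactly
the gaps `g` with `g − x < y − x` (computed in `Fin n`, i.e. modulo `n`). -/
def SimpleGraph.CircularLayout.width [Fintype V] [DecidableEq V] {G : SimpleGraph V}
    [DecidableRel G.Adj] (L : G.CircularLayout) : ℕ :=
  Finset.univ.sup (fun g : Fin (Fintype.card V) =>
    (G.edgeFinset.filter (fun e =>
      g - L.pos (L.dir e).1 < L.pos (L.dir e).2 - L.pos (L.dir e).1)).card)

/-- The circular cutwidth of a finite simple graph: the minimum width of a circular layout. -/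
noncomputable def SimpleGraph.circularCutwidth [Fintype V] [DecidableEq V] (G : SimpleGraph V)
    [DecidableRel G.Adj] : ℕ :=
  sInf { m | ∃ L : G.CircularLayout, m = L.width }

/-!
Cutting a circular layout of a tree open does not increase its width once it is untwisted. Since
a tree has no cycles, the positions lift to integers `ψ` with `ψ y = ψ x + ℓ` for every edge drawn
clockwise from `x` to `y` over `ℓ` gaps. As `ψ ≡ pos (mod n)`, `ψ` is injective; in the linear
ordering by `ψ` an edge crossing the cut just after `w` is drawn over the gap following `pos w`.
Conversely, a linear ordering is a circular layout in which every edge is drawn upwards.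
-/

namespace Fin

variable {n : ℕ}

lemma sub_lt_sub_iff_le_and_lt {a b g : Fin n} (hab : a ≤ b) :
    g - a < b - a ↔ a ≤ g ∧ g < b := by
  simp only [lt_def, le_def, sub_val_of_le hab]
  rcases le_or_gt a g with hag | hga
  · rw [sub_val_of_le hag]; rw [le_def] at hag; omega
  · rw [coe_sub_iff_lt.2 hga]; rw [lt_def] at hga; omega

lemma val_sub_modEq (a b : Fin n) : ((a - b).val : ℤ) ≡ a.val - b.val [ZMOD n] := by
  rw [val_sub, Int.natCast_mod, Nat.cast_add, Nat.cast_sub b.isLt.le]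
  calc ((n : ℤ) - b.val + a.val) % n ≡ (n : ℤ) - b.val + a.val [ZMOD n] := Int.mod_modEq _ _
    _ = a.val - b.val + n := by ring
    _ ≡ a.val - b.val [ZMOD n] := Int.add_modEq_right

lemma val_sub_eq_of_modEq {a b : Fin n} {s t : ℤ} (ha : s ≡ a.val [ZMOD n])
    (hb : t ≡ b.val [ZMOD n]) (h₀ : s ≤ t) (hn : t - s < n) : ((b - a).val : ℤ) = t - s := by
  have hmod : ((b - a).val : ℤ) ≡ t - s [ZMOD n] := (val_sub_modEq b a).trans (hb.sub ha).symm
  have hlt : ((b - a).val : ℤ) < n := by exact_mod_cast (b - a).isLt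
  rw [Int.ModEq, Int.emod_eq_of_lt (by positivity) hlt, Int.emod_eq_of_lt (by omega) hn] at hmod
  exact hmod

end Fin

namespace SimpleGraph

variable {G : SimpleGraph V}

lemma Preconnected.eq_of_forall_adj {β : Type*} (hG : G.Preconnected) {f : V → β}
    (hf : ∀ ⦃u v⦄, G.Adj u v → f u = f v) (u v : V) : f u = f v := by
  obtain ⟨p⟩ := hG u v
  induction p with
  | nil => rfl
  | cons h _ ih => exact (hf h).trans ih

lemma IsTree.exists_potential {α : Type*} [AddCommGroup α] (hG : G.IsTree) (δ : V → V → α)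
    (hδ : ∀ ⦃u v⦄, G.Adj u v → δ v u = -δ u v) :
    ∃ φ : V → α, ∀ ⦃u v⦄, G.Adj u v → φ v = φ u + δ u v := by
  obtain ⟨r⟩ := hG.connected.nonempty
  choose P hP _ using hG.existsUnique_path r
  let φ v := ((P v).darts.map fun d => δ d.fst d.snd).sum
  have φ_concat : ∀ ⦃u v⦄ (h : G.Adj u v), u ∈ (P v).support → φ v = φ u + δ u v := by
    intro u v h hu
    simp only [φ, hG.isAcyclic.path_concat (hP u) (hP v) h hu, Walk.darts_concat,
      List.concat_eq_append, List.map_append, List.sum_append, List.map_singleton,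
      List.sum_singleton]
  refine ⟨φ, fun u v h => ?_⟩
  by_cases hu : u ∈ (P v).support
  · exact φ_concat h hu
  · have hv := hG.isAcyclic.mem_support_of_ne_mem_support_of_adj_of_isPath (hP u) (hP v) h hu
    rw [φ_concat h.symm hv, hδ h, neg_add_cancel_right]

end SimpleGraph

lemma Fintype.exists_equiv_fin_le_iff_of_injective [Fintype V] {α : Type*} [LinearOrder α]
    {φ : V → α} (hφ : Function.Injective φ) :
    ∃ f : V ≃ Fin (Fintype.card V), ∀ u v, f u ≤ f v ↔ φ u ≤ φ v := by
  let _ := LinearOrder.lift' φ hφ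
  let e := (Fintype.orderIsoFinOfCardEq V rfl).symm
  exact ⟨e.toEquiv, fun _ _ => e.le_iff_le⟩

namespace SimpleGraph.CircularLayout

variable [Fintype V] [DecidableEq V] {G : SimpleGraph V} [DecidableRel G.Adj]
  (L : G.CircularLayout)

def arcLength (e : Sym2 V) : ℕ := (L.pos (L.dir e).2 - L.pos (L.dir e).1).val

def displacement (u v : V) : ℤ :=
  if L.dir s(u, v) = (u, v) then L.arcLength s(u, v) else -L.arcLength s(u, v)

lemma dir_eq_or_eq {u v : V} (h : G.Adj u v) :
    L.dir s(u, v) = (u, v) ∨ L.dir s(u, v) = (v, u) := by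
  have hd := L.hdir s(u, v) (mem_edgeFinset.2 h)
  rw [Sym2.eq_iff] at hd
  exact hd.imp (fun h => Prod.ext h.1 h.2) (fun h => Prod.ext h.1 h.2)

lemma displacement_swap {u v : V} (h : G.Adj u v) : L.displacement v u = -L.displacement u v := by
  have hvu : (v, u) ≠ (u, v) := fun hc => h.ne (Prod.ext_iff.1 hc).2
  simp only [displacement, Sym2.eq_swap (a := v)]
  rcases L.dir_eq_or_eq h with hd | hd <;> simp [hd, hvu, hvu.symm]

lemma displacement_modEq {u v : V} (h : G.Adj u v) :
    L.displacement u v ≡ (L.pos v).val - (L.pos u).val [ZMOD Fintype.card V] := by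
  rcases L.dir_eq_or_eq h with hd | hd
  · simpa [displacement, arcLength, hd] using Fin.val_sub_modEq (L.pos v) (L.pos u)
  · have hvu : (v, u) ≠ (u, v) := fun hc => h.ne (Prod.ext_iff.1 hc).2
    simpa [displacement, arcLength, hd, hvu] using (Fin.val_sub_modEq (L.pos u) (L.pos v)).neg

lemma adj_dir {e : Sym2 V} (he : e ∈ G.edgeFinset) : G.Adj (L.dir e).1 (L.dir e).2 := by
  rw [← mem_edgeSet, L.hdir e he, ← mem_edgeFinset]
  exact he

lemma fst_dir_mem {e : Sym2 V} (he : e ∈ G.edgeFinset) : (L.dir e).1 ∈ e := by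
  have h := Sym2.mem_mk_left (L.dir e).1 (L.dir e).2
  rwa [L.hdir e he] at h

lemma snd_dir_mem {e : Sym2 V} (he : e ∈ G.edgeFinset) : (L.dir e).2 ∈ e := by
  have h := Sym2.mem_mk_right (L.dir e).1 (L.dir e).2
  rwa [L.hdir e he] at h

lemma displacement_dir {e : Sym2 V} (he : e ∈ G.edgeFinset) :
    L.displacement (L.dir e).1 (L.dir e).2 = L.arcLength e := by
  rw [displacement, L.hdir e he, if_pos rfl]

lemma exists_lift_of_isTree (hG : G.IsTree) :
    ∃ ψ : V → ℤ, (∀ v, ψ v ≡ (L.pos v).val [ZMOD Fintype.card V]) ∧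
      ∀ e ∈ G.edgeFinset, ψ (L.dir e).2 = ψ (L.dir e).1 + L.arcLength e := by
  obtain ⟨φ, hφ⟩ := hG.exists_potential L.displacement fun _ _ h => L.displacement_swap h
  obtain ⟨r⟩ := hG.connected.nonempty
  have hoffset (v : V) : φ v - (L.pos v).val ≡ φ r - (L.pos r).val [ZMOD Fintype.card V] := by
    refine hG.connected.preconnected.eq_of_forall_adj
      (f := fun v => (φ v - (L.pos v).val) % Fintype.card V) (fun u v h => ?_) v r
    have hmod := Int.modEq_iff_dvd.1 (L.displacement_modEq h).symm
    show _ ≡ _ [ZMOD _]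
    rw [Int.modEq_iff_dvd, hφ h]
    convert hmod using 1
    ring
  refine ⟨fun v => φ v - (φ r - (L.pos r).val), fun v => ?_, fun e he => ?_⟩
  · have hdvd := Int.modEq_iff_dvd.1 (hoffset v)
    rw [Int.modEq_iff_dvd]
    convert hdvd using 1
    ring
  · simp only [hφ (L.adj_dir he), L.displacement_dir he]
    ring

lemma cutAt_le_width_of_lift {ψ : V → ℤ} (hψ : ∀ v, ψ v ≡ (L.pos v).val [ZMOD Fintype.card V])
    (hψ_dir : ∀ e ∈ G.edgeFinset, ψ (L.dir e).2 = ψ (L.dir e).1 + L.arcLength e)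
    {f : V ≃ Fin (Fintype.card V)} (hf : ∀ u v, f u ≤ f v ↔ ψ u ≤ ψ v) (w : V) :
    G.cutAt f (f w) ≤ L.width := by
  refine le_sup_of_le (mem_univ (L.pos w)) (card_le_card fun e he => ?_)
  simp only [mem_filter] at he ⊢
  obtain ⟨he, u, hu, v, hv, huw, hwv⟩ := he
  refine ⟨he, ?_⟩
  rw [hf] at huw
  rw [lt_iff_not_ge, hf, not_le] at hwv
  rw [← L.hdir e he, Sym2.mem_iff] at hu hv
  have hlen : L.arcLength e < Fintype.card V := Fin.isLt _
  have hxy := hψ_dir e he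
  have hcut : ψ (L.dir e).1 ≤ ψ w ∧ ψ w < ψ (L.dir e).2 := by
    rcases hu with rfl | rfl <;> rcases hv with rfl | rfl <;> omega
  rw [Fin.lt_def, ← Nat.cast_lt (α := ℤ),
    Fin.val_sub_eq_of_modEq (hψ _) (hψ w) hcut.1 (by omega)]
  exact (sub_lt_iff_lt_add' ..).2 (hxy ▸ hcut.2)

lemma cutwidth_le_width_of_isTree (hG : G.IsTree) : G.cutwidth ≤ L.width := by
  obtain ⟨ψ, hψ, hψ_dir⟩ := L.exists_lift_of_isTree hG
  have hψ_inj : Function.Injective ψ := fun u v h => L.pos.injective <| Fin.ext <|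
    Nat.ModEq.eq_of_lt_of_lt (Int.natCast_modEq_iff.1 ((hψ u).symm.trans (h ▸ hψ v)))
      (L.pos u).isLt (L.pos v).isLt
  obtain ⟨f, hf⟩ := Fintype.exists_equiv_fin_le_iff_of_injective hψ_inj
  calc G.cutwidth ≤ univ.sup (G.cutAt f) := Nat.sInf_le ⟨f, rfl⟩
    _ ≤ L.width := Finset.sup_le fun i _ => ?_
  obtain ⟨w, rfl⟩ := f.surjective i
  exact L.cutAt_le_width_of_lift hψ hψ_dir hf w

end SimpleGraph.CircularLayout

namespace SimpleGraph

variable [Fintype V] [DecidableEq V] (G : SimpleGraph V) [DecidableRel G.Adj]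

noncomputable def CircularLayout.ofEquiv (f : V ≃ Fin (Fintype.card V)) : G.CircularLayout where
  pos := f
  dir e := if f e.out.1 < f e.out.2 then e.out else e.out.swap
  hdir e _ := by
    split_ifs
    exacts [Quot.out_eq e, Sym2.eq_swap.trans (Quot.out_eq e)]

variable {G}

lemma CircularLayout.ofEquiv_dir_lt (f : V ≃ Fin (Fintype.card V)) {e : Sym2 V}
    (he : e ∈ G.edgeFinset) : f ((ofEquiv G f).dir e).1 < f ((ofEquiv G f).dir e).2 := by
  have hne : f e.out.1 ≠ f e.out.2 := fun h => G.not_isDiag_of_mem_edgeSet (mem_edgeFinset.1 he)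
    (Quot.out_eq e ▸ Sym2.mk_isDiag_iff.2 (f.injective h))
  simp only [ofEquiv]
  split_ifs with h
  exacts [h, lt_of_le_of_ne (not_lt.1 h) hne.symm]

lemma CircularLayout.width_ofEquiv_le (f : V ≃ Fin (Fintype.card V)) :
    (ofEquiv G f).width ≤ univ.sup (G.cutAt f) := by
  refine Finset.sup_mono_fun fun g _ => card_le_card fun e he => ?_
  simp only [mem_filter] at he ⊢
  obtain ⟨he, hgap⟩ := he
  have hcut := (Fin.sub_lt_sub_iff_le_and_lt (ofEquiv_dir_lt f he).le).1 hgap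
  exact ⟨he, _, (ofEquiv G f).fst_dir_mem he, _, (ofEquiv G f).snd_dir_mem he, hcut⟩

variable (G)

lemma circularCutwidth_le_cutwidth : G.circularCutwidth ≤ G.cutwidth := by
  obtain ⟨f, hf⟩ := Nat.sInf_mem (⟨_, Fintype.equivFin V, rfl⟩ :
    {m | ∃ f : V ≃ Fin (Fintype.card V), m = univ.sup (G.cutAt f)}.Nonempty)
  calc G.circularCutwidth ≤ (CircularLayout.ofEquiv G f).width := Nat.sInf_le ⟨_, rfl⟩
    _ ≤ univ.sup (G.cutAt f) := CircularLayout.width_ofEquiv_le f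
    _ = G.cutwidth := hf.symm

end SimpleGraph

/-- **Theorem.** The circular cutwidth of a finite tree equals its cutwidth. -/
theorem circularCutwidth_eq_cutwidth_of_isTree [Fintype V] [DecidableEq V]
    (G : SimpleGraph V) [DecidableRel G.Adj] (hT : G.IsTree) :
    G.circularCutwidth = G.cutwidth :=
  le_antisymm (G.circularCutwidth_le_cutwidth) <|
    le_csInf ⟨_, SimpleGraph.CircularLayout.ofEquiv G (Fintype.equivFin V), rfl⟩
      (by rintro _ ⟨L, rfl⟩; exact L.cutwidth_le_width_of_isTree hT)
end
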